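/- arXiv:1308.5289 — 2 statements merged into one kernel-verified Lean document; each statement's English description precedes it below -/
import Mathlib

section
/- Let A be a commutative ring and E an A-module. Then E is flat over A if and only if for every n and every tuple f = (f₁, …, fₙ) ∈ Aⁿ, the module of relations R(f,E) = { (e₁,…,eₙ) ∈ Eⁿ : Σ fᵢ eᵢ = 0 } equals R(f,A)·E, i.e., every relation of f in E is an E-linear combination of relations of f in A. -/
/-! The elements of `R(f,A)·E` are exactly the trivial relations `Σ fᵢ eᵢ = 0` of the equational
criterion for flatness (`eᵢ = Σⱼ aᵢⱼ yⱼ` with `Σᵢ fᵢ aᵢⱼ = 0` for every `j`), so the theorem is that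
criterion, `Module.Flat.iff_forall_isTrivialRelation`, restated. -/

open Module

theorem Module.isTrivialRelation_iff_mem_span {R M ι : Type*} [CommRing R] [AddCommGroup M]
    [Module R M] [Fintype ι] (f : ι → R) (x : ι → M) :
    IsTrivialRelation f x ↔
      x ∈ Submodule.span R
        {v : ι → M | ∃ a : ι → R, (∑ i, a i * f i = 0) ∧ ∃ y : M, v = fun i => a i • y} := by
  constructor
  · rintro ⟨k, a, y, hx, ha⟩
    have hx_sum : x = ∑ j, fun i => a i j • y j := by
      funext i
      simp only [Finset.sum_apply, hx i]
    rw [hx_sum]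
    refine Submodule.sum_mem _ fun j _ => Submodule.subset_span ?_
    exact ⟨fun i => a i j, by simpa only [mul_comm] using ha j, y j, rfl⟩
  · intro hx
    obtain ⟨k, c, g, hg⟩ := Submodule.mem_span_set'.mp hx
    choose a ha y hy using fun j => (g j).2
    refine ⟨k, fun i j => c j * a j i, y, fun i => ?_, fun j => ?_⟩
    · simp only [← hg, Finset.sum_apply, Pi.smul_apply, hy, mul_smul]
    · simp only [mul_left_comm _ (c j), ← Finset.mul_sum, mul_comm (f _), ha j, mul_zero]

/-- Malgrange's criterion: a module `E` over a commutative ring `A` is flat iff for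
every `n` and every `f = (f₁,…,fₙ) ∈ Aⁿ`, the module of relations
`R(f,E) = {e ∈ Eⁿ : Σ fᵢ eᵢ = 0}` equals `R(f,A)·E`, the submodule of `Eⁿ` generated
by the tuples `(a₁ • x, …, aₙ • x)` with `(a₁,…,aₙ) ∈ R(f,A)` and `x ∈ E`. -/
theorem flat_iff_relations (A : Type) [CommRing A] (E : Type) [AddCommGroup E]
    [Module A E] :
    Module.Flat A E ↔
      ∀ (n : ℕ) (f : Fin n → A),
        {e : Fin n → E | ∑ i, f i • e i = 0} =
          (Submodule.span A
            {v : Fin n → E | ∃ a : Fin n → A,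
              (∑ i, a i * f i = 0) ∧ ∃ x : E, v = fun i => a i • x} :
            Submodule A (Fin n → E)) := by
  rw [Flat.iff_forall_isTrivialRelation]
  constructor
  · intro h n f
    ext e
    rw [Set.mem_ofPred_eq, SetLike.mem_coe, ← isTrivialRelation_iff_mem_span]
    exact ⟨h, sum_smul_eq_zero_of_isTrivialRelation⟩
  · intro h l f x hx
    rw [isTrivialRelation_iff_mem_span, ← SetLike.mem_coe, ← h]
    exact hx
end

section
/- Let R be a commutative ring of real-valued functions on a set X containing constants, and let I, J be ideals of R. Then ʳ√(I·J) = ʳ√I ∩ ʳ√J. -/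
/-- The real (Łojasiewicz) radical of a set `S` of elements of a ring of real-valued
functions on `X`. -/
def realRad {X : Type} (R : Subring (X → ℝ)) (S : Set R) : Set R :=
  {f | ∃ m : ℕ, 1 ≤ m ∧ ∃ g ∈ S, ∀ x : X, |(f : X → ℝ) x| ^ m ≤ |(g : X → ℝ) x|}

/-- For ideals `I, J` in a ring `R` of real-valued functions on `X` containing the
constants, `ʳ√(I·J) = ʳ√I ∩ ʳ√J`. -/
theorem realRad_mul {X : Type} (R : Subring (X → ℝ))
    (hconst : ∀ c : ℝ, (fun _ : X => c) ∈ R) (I J : Ideal R) :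
    realRad R ((I * J : Ideal R) : Set R) =
      realRad R (I : Set R) ∩ realRad R (J : Set R) := by
  ext f
  constructor
  · rintro ⟨m, hm, g, hg, hle⟩
    exact ⟨⟨m, hm, g, Ideal.mul_le_left hg, hle⟩,
           ⟨m, hm, g, Ideal.mul_le_right hg, hle⟩⟩
  · rintro ⟨⟨m, hm, g, hg, hgle⟩, ⟨n, hn, h, hh, hhle⟩⟩
    refine ⟨m + n, le_trans hm (Nat.le_add_right _ _), g * h,
      Ideal.mul_mem_mul hg hh, fun x => ?_⟩
    have : ((g * h : R) : X → ℝ) x = (g : X → ℝ) x * (h : X → ℝ) x := rfl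
    rw [this, pow_add, abs_mul]
    exact mul_le_mul (hgle x) (hhle x) (pow_nonneg (abs_nonneg _) _) (abs_nonneg _)
end
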